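/- Let E be a real Banach space and let B_w denote the closed unit ball of E endowed with the subspace topology inherited from the weak topology of E. For a function f : B_w → ℝ the following are equivalent: (i) f is sequentially continuous on B_w; (ii) the restriction of f to every compact subset of B_w is continuous. -/

import Mathlib

/-!
Compact subsets of a normed space with its weak topology are Fréchet–Urysohn, so on each of them
sequential continuity is continuity; conversely, a convergent sequence together with its limit is
compact.

The Fréchet–Urysohn property is Whitley's argument for Eberlein–Šmulian: for `x` in the weak
closure of `A ⊆ C`, pick `aₙ ∈ A` inductively, `1/(n+1)`-close to `x` on a finite set of
functionals that 2-norms the span of `x, a₀, …, aₙ₋₁`. A weak cluster point `z` of `(aₙ)` lies in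
the closed span `Y` of these points (norm-closed and convex, hence weakly closed) and agrees with
`x` on all chosen functionals, which separate the points of `Y`; so `z = x`, and compactness of
`C` forces `aₙ → x`.
-/

open Topology

/-- The closed unit ball of a normed space `E`, viewed as a subset of `E` equipped with
its weak topology. -/
def weakBall (E : Type*) [NormedAddCommGroup E] [NormedSpace ℝ E] : Set (WeakSpace ℝ E) :=
  {x | ‖(toWeakSpace ℝ E).symm x‖ ≤ 1}

open Filter Set

section Topological

variable {X Y : Type*} [TopologicalSpace X] [TopologicalSpace Y]

theorem frechetUrysohnSpace_of_forall_exists_seq_tendsto {C : Set X}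
    (h : ∀ A ⊆ C, ∀ x ∈ closure A, ∃ u : ℕ → X, (∀ n, u n ∈ A) ∧ Tendsto u atTop (𝓝 x)) :
    FrechetUrysohnSpace C := by
  refine ⟨fun s x hx => ?_⟩
  rw [IsInducing.subtypeVal.closure_eq_preimage_closure_image, mem_preimage] at hx
  obtain ⟨u, hus, hu⟩ := h _ (Subtype.coe_image_subset C s) _ hx
  choose v hv hvu using hus
  exact ⟨v, hv, by simpa only [IsInducing.subtypeVal.tendsto_nhds_iff, Function.comp_def, hvu]⟩

theorem frechetUrysohnSpace_of_image_val {s : Set X} {K : Set s}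
    [FrechetUrysohnSpace ((↑) '' K : Set X)] : FrechetUrysohnSpace K := by
  let i : K → ((↑) '' K : Set X) := fun k => ⟨k.1.1, mem_image_of_mem _ k.2⟩
  have hval : IsInducing (((↑) : s → X) ∘ ((↑) : K → s)) :=
    IsInducing.subtypeVal.comp IsInducing.subtypeVal
  have hi : IsInducing i := .of_comp (by fun_prop) continuous_subtype_val hval
  exact hi.frechetUrysohnSpace

theorem seqContinuous_iff_forall_isCompact_continuousOn
    (hX : ∀ K : Set X, IsCompact K → FrechetUrysohnSpace K) {f : X → Y} :
    SeqContinuous f ↔ ∀ K : Set X, IsCompact K → ContinuousOn f K := by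
  refine ⟨fun hf K hK => ?_, fun hf u x hux => ?_⟩
  · have := hX K hK
    refine continuousOn_iff_continuous_domRestrict.2 (SeqContinuous.continuous fun u x hux => ?_)
    exact hf (continuous_subtype_val.seqContinuous hux)
  · have hu : Tendsto u atTop (𝓝[insert x (range u)] x) :=
      tendsto_nhdsWithin_iff.2 ⟨hux, .of_forall fun n => mem_insert_of_mem _ (mem_range_self n)⟩
    exact (hf _ hux.isCompact_insert_range x (mem_insert x _)).tendsto.comp hu

theorem IsCompact.tendsto_of_forall_tendsto_comp {α ι Z : Type*} [TopologicalSpace Z] [T2Space Z]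
    {C S : Set X} (hC : IsCompact C) (hS : IsClosed S) {g : ι → X → Z}
    (hg : ∀ i, Continuous (g i)) {x : X} (hsep : ∀ y ∈ S, (∀ i, g i y = g i x) → y = x)
    {l : Filter α} {u : α → X} (huC : ∀ᶠ a in l, u a ∈ C) (huS : ∀ᶠ a in l, u a ∈ S)
    (hlim : ∀ i, Tendsto (g i ∘ u) l (𝓝 (g i x))) : Tendsto u l (𝓝 x) := by
  refine hC.tendsto_nhds_of_unique_mapClusterPt huC fun z _ hz => hsep z ?_ fun i => ?_
  · exact hS.mem_of_mapClusterPt hz huS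
  · exact eq_of_nhds_neBot (((hg i).continuousAt.mapClusterPt hz).clusterPt.mono (hlim i))

end Topological

section Normed

variable {E : Type*} [NormedAddCommGroup E] [NormedSpace ℝ E]

theorem Submodule.exists_finset_dual_norming (M : Submodule ℝ E) [FiniteDimensional ℝ M] :
    ∃ T : Finset (StrongDual ℝ E), (∀ φ ∈ T, ‖φ‖ ≤ 1) ∧ ∀ y ∈ M, ∃ φ ∈ T, ‖y‖ ≤ 2 * φ y := by
  classical
  choose g hg_norm hg using fun c : E => exists_dual_vector'' ℝ c
  set K : Set E := (↑) '' Metric.sphere (0 : M) 1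
  have hK : IsCompact K := (isCompact_sphere 0 1).image continuous_subtype_val
  have hK_self : ∀ c ∈ K, c ∈ {y | 1 / 2 < g c y} := by
    rintro _ ⟨c, hc, rfl⟩
    have hc1 : ‖(c : E)‖ = 1 := mem_sphere_zero_iff_norm.1 hc
    show 1 / 2 < g c c
    rw [hg, hc1]
    norm_num
  obtain ⟨t, -, ht, hcover⟩ := hK.elim_finite_subcover_image
    (fun c _ => isOpen_lt continuous_const (g c).continuous)
    fun c hc => mem_biUnion hc (hK_self c hc)
  refine ⟨insert 0 (ht.toFinset.image g), ?_, fun y hy => ?_⟩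
  · simp only [Finset.mem_insert, Finset.mem_image, Finite.mem_toFinset]
    rintro φ (rfl | ⟨c, -, rfl⟩)
    exacts [by simp, hg_norm c]
  rcases eq_or_ne y 0 with rfl | hy0
  · exact ⟨0, Finset.mem_insert_self _ _, by simp⟩
  have hyK : ‖y‖⁻¹ • y ∈ K :=
    ⟨⟨_, M.smul_mem _ hy⟩, by simp [norm_smul, hy0], rfl⟩
  obtain ⟨c, hct, hc⟩ := mem_iUnion₂.1 (hcover hyK)
  refine ⟨g c, Finset.mem_insert_of_mem (Finset.mem_image_of_mem g (ht.mem_toFinset.2 hct)), ?_⟩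
  have : 1 / 2 < ‖y‖⁻¹ * g c y := by simpa using hc
  rw [lt_inv_mul_iff₀ (norm_pos_iff.2 hy0)] at this
  linarith

theorem eq_zero_of_mem_closure_of_forall_dual_eq_zero {Φ : Set (StrongDual ℝ E)}
    (hΦ : ∀ φ ∈ Φ, ‖φ‖ ≤ 1) {D : Set E} (hD : ∀ d ∈ D, ∃ φ ∈ Φ, ‖d‖ ≤ 2 * φ d) {y : E}
    (hy : y ∈ closure D) (h : ∀ φ ∈ Φ, φ y = 0) : y = 0 := by
  refine norm_le_zero_iff.1 (le_of_forall_pos_lt_add fun ε hε => ?_)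
  obtain ⟨d, hdD, hyd⟩ := Metric.mem_closure_iff.1 hy (ε / 3) (by positivity)
  obtain ⟨φ, hφ, hd⟩ := hD d hdD
  have hφd : φ d ≤ ε / 3 := calc
    φ d = φ (d - y) := by rw [map_sub, h φ hφ, sub_zero]
    _ ≤ ‖φ‖ * ‖d - y‖ := (le_abs_self _).trans (φ.le_opNorm _)
    _ ≤ 1 * (ε / 3) := by
        gcongr
        exacts [hΦ φ hφ, by rw [← dist_eq_norm, dist_comm]; exact hyd.le]
    _ = ε / 3 := one_mul _
  calc ‖y‖ ≤ ‖y - d‖ + ‖d‖ := norm_le_norm_sub_add y d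
    _ < ε / 3 + 2 * (ε / 3) := by rw [← dist_eq_norm]; linarith
    _ = 0 + ε := by ring

theorem continuous_dual_toWeakSpace_symm (φ : StrongDual ℝ E) :
    Continuous fun y : WeakSpace ℝ E => φ ((toWeakSpace ℝ E).symm y) :=
  WeakBilin.eval_continuous (topDualPairing ℝ E).flip φ

theorem IsClosed.isClosed_toWeakSpace_image {s : Set E} (hs : IsClosed s) (hconv : Convex ℝ s) :
    IsClosed (toWeakSpace ℝ E '' s) := by
  rw [← closure_eq_iff_isClosed, ← hconv.toWeakSpace_closure ℝ, hs.closure_eq]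

theorem exists_mem_forall_dual_lt_of_mem_closure {A : Set (WeakSpace ℝ E)} {x : WeakSpace ℝ E}
    (hx : x ∈ closure A) (G : Finset (StrongDual ℝ E)) {ε : ℝ} (hε : 0 < ε) :
    ∃ a ∈ A, ∀ φ ∈ G,
      |φ ((toWeakSpace ℝ E).symm a) - φ ((toWeakSpace ℝ E).symm x)| < ε := by
  have := mem_closure_iff_nhdsWithin_neBot.1 hx
  have hnear : ∀ᶠ a in 𝓝[A] x, ∀ φ ∈ G,
      |φ ((toWeakSpace ℝ E).symm a) - φ ((toWeakSpace ℝ E).symm x)| < ε :=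
    (G.eventually_all).2 fun φ _ => nhdsWithin_le_nhds <|
      Metric.tendsto_nhds.1 ((continuous_dual_toWeakSpace_symm φ).tendsto x) ε hε
  exact ((eventually_mem_nhdsWithin (s := A)).and hnear).exists

theorem WeakSpace.exists_seq_dual_norming_of_mem_closure {A : Set (WeakSpace ℝ E)}
    {x : WeakSpace ℝ E} (hx : x ∈ closure A) :
    ∃ (u : ℕ → WeakSpace ℝ E) (Φ : Set (StrongDual ℝ E)) (D : Submodule ℝ E),
      (∀ n, u n ∈ A) ∧ (∀ φ ∈ Φ, ‖φ‖ ≤ 1) ∧ (∀ d ∈ D, ∃ φ ∈ Φ, ‖d‖ ≤ 2 * φ d) ∧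
      (toWeakSpace ℝ E).symm x ∈ D ∧ (∀ n, (toWeakSpace ℝ E).symm (u n) ∈ D) ∧
      ∀ φ ∈ Φ, Tendsto (fun n => φ ((toWeakSpace ℝ E).symm (u n))) atTop
        (𝓝 (φ ((toWeakSpace ℝ E).symm x))) := by
  classical
  set e := toWeakSpace ℝ E
  choose T hT_norm hT using fun s : Finset E =>
    (Submodule.span ℝ (s : Set E)).exists_finset_dual_norming
  -- `G s` collects the norming functionals of all subsets of `s`, so that it is monotone in `s`.
  let G : Finset E → Finset (StrongDual ℝ E) := fun s => s.powerset.biUnion T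
  have hG_mono : Monotone G := fun s t hst =>
    Finset.biUnion_subset_biUnion_of_subset_left T (Finset.powerset_mono.2 hst)
  have hT_G : ∀ s, T s ⊆ G s := fun s =>
    Finset.subset_biUnion_of_mem T (Finset.mem_powerset_self s)
  choose a haA ha using fun (n : ℕ) (s : Finset E) =>
    exists_mem_forall_dual_lt_of_mem_closure hx (G s) (Nat.one_div_pos_of_nat (n := n))
  obtain ⟨s, hs_zero, hs_succ⟩ : ∃ s : ℕ → Finset E,
      s 0 = {e.symm x} ∧ ∀ n, s (n + 1) = insert (e.symm (a n (s n))) (s n) :=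
    ⟨fun n => Nat.rec {e.symm x} (fun n t => insert (e.symm (a n t)) t) n, rfl, fun _ => rfl⟩
  have hs_mono : Monotone s :=
    monotone_nat_of_le_succ fun n => hs_succ n ▸ Finset.subset_insert _ _
  let V : ℕ → Submodule ℝ E := fun n => Submodule.span ℝ (s n)
  have hV_mono : Monotone V := fun m n hmn =>
    Submodule.span_mono (Finset.coe_subset.2 (hs_mono hmn))
  have hmemD {d : E} : d ∈ ⨆ n, V n ↔ ∃ n, d ∈ V n :=
    Submodule.mem_iSup_of_directed _ hV_mono.directed_le
  refine ⟨fun n => a n (s n), ⋃ n, G (s n), ⨆ n, V n, fun n => haA n (s n), ?_, ?_, ?_, ?_, ?_⟩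
  · simp only [mem_iUnion, Finset.mem_coe, forall_exists_index]
    intro φ n hφ
    obtain ⟨t, -, hφt⟩ := Finset.mem_biUnion.1 hφ
    exact hT_norm t φ hφt
  · intro d hd
    obtain ⟨n, hdn⟩ := hmemD.1 hd
    obtain ⟨φ, hφ, hdφ⟩ := hT (s n) d hdn
    exact ⟨φ, mem_iUnion.2 ⟨n, hT_G _ hφ⟩, hdφ⟩
  · exact hmemD.2 ⟨0, Submodule.subset_span (by simp [hs_zero])⟩
  · exact fun n => hmemD.2 ⟨n + 1, Submodule.subset_span (by simp [hs_succ])⟩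
  · simp only [mem_iUnion, Finset.mem_coe, forall_exists_index]
    intro φ n hφ
    rw [tendsto_iff_norm_sub_tendsto_zero]
    refine squeeze_zero_norm' ?_ tendsto_one_div_add_atTop_nhds_zero_nat
    filter_upwards [eventually_ge_atTop n] with m hm
    simpa using (ha m (s m) φ (hG_mono (hs_mono hm) hφ)).le

theorem WeakSpace.exists_seq_tendsto_of_isCompact_of_mem_closure {C A : Set (WeakSpace ℝ E)}
    (hC : IsCompact C) (hAC : A ⊆ C) {x : WeakSpace ℝ E} (hx : x ∈ closure A) :
    ∃ u : ℕ → WeakSpace ℝ E, (∀ n, u n ∈ A) ∧ Tendsto u atTop (𝓝 x) := by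
  obtain ⟨u, Φ, D, huA, hΦ, hD, hxD, huD, hlim⟩ := exists_seq_dual_norming_of_mem_closure hx
  set e := toWeakSpace ℝ E
  have hsep : ∀ y ∈ e '' D.topologicalClosure,
      (∀ φ : Φ, φ.1 (e.symm y) = φ.1 (e.symm x)) → y = x := by
    rintro _ ⟨y, hy, rfl⟩ hyx
    have hyx_mem : y - e.symm x ∈ closure (D : Set E) := by
      rw [← Submodule.topologicalClosure_coe]
      exact D.topologicalClosure.sub_mem hy (D.le_topologicalClosure hxD)
    have := eq_zero_of_mem_closure_of_forall_dual_eq_zero hΦ hD hyx_mem fun φ hφ => by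
      simpa [sub_eq_zero] using hyx ⟨φ, hφ⟩
    rw [sub_eq_zero.1 this, e.apply_symm_apply]
  refine ⟨u, huA, hC.tendsto_of_forall_tendsto_comp
    (D.isClosed_topologicalClosure.isClosed_toWeakSpace_image D.topologicalClosure.convex)
    (fun φ : Φ => continuous_dual_toWeakSpace_symm φ.1) hsep (.of_forall fun n => hAC (huA n))
    (.of_forall fun n => ⟨_, D.le_topologicalClosure (huD n), e.apply_symm_apply _⟩)
    fun φ => hlim φ.1 φ.2⟩

theorem WeakSpace.frechetUrysohnSpace_of_isCompact {C : Set (WeakSpace ℝ E)} (hC : IsCompact C) :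
    FrechetUrysohnSpace C :=
  frechetUrysohnSpace_of_forall_exists_seq_tendsto fun _ hAC _ hx =>
    exists_seq_tendsto_of_isCompact_of_mem_closure hC hAC hx

end Normed

theorem stmt_15_general {E : Type*} [NormedAddCommGroup E] [NormedSpace ℝ E]
    (f : ↥(weakBall E) → ℝ) :
    SeqContinuous f ↔ ∀ C : Set ↥(weakBall E), IsCompact C → ContinuousOn f C :=
  seqContinuous_iff_forall_isCompact_continuousOn fun _ hC =>
    have := WeakSpace.frechetUrysohnSpace_of_isCompact (hC.image continuous_subtype_val)
    frechetUrysohnSpace_of_image_val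

theorem stmt_15 {E : Type*} [NormedAddCommGroup E] [NormedSpace ℝ E] [CompleteSpace E]
    (f : ↥(weakBall E) → ℝ) :
    SeqContinuous f ↔ ∀ C : Set ↥(weakBall E), IsCompact C → ContinuousOn f C :=
  stmt_15_general f
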